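/- arXiv:0808.1627 — 6 statements merged into one kernel-verified Lean document; each statement's English description precedes it below -/
import Mathlib

section
/- Let G be a group acting on a group K on the right by group automorphisms, and let φ : G → K be a bijective 1-cocycle, i.e. φ(fg) = (φ(f))^g · φ(g) for all f,g ∈ G. Then the map R : G × G → G × G defined by R(f,g) = (f·g·ψ(f,g)⁻¹, ψ(f,g)), where ψ(f,g) = φ⁻¹((φ(f))^g), is a bijection satisfying the Yang-Baxter equation (R × id)(id × R)(R × id) = (id × R)(R × id)(id × R). -/
/-- `f × id` acting on triples. -/
def fstOp {G : Type*} (f : G × G → G × G) : G × G × G → G × G × G :=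
  fun t => ((f (t.1, t.2.1)).1, (f (t.1, t.2.1)).2, t.2.2)

/-- `id × f` acting on triples. -/
def sndOp {G : Type*} (f : G × G → G × G) : G × G × G → G × G × G :=
  fun t => (t.1, f t.2)

/-!
Write `ψ(f, g) = φ⁻¹(φ f <• g)`. The pair `R(f, g) = (x, y)` is characterised by `x * y = f * g`
and `φ y = φ f <• g`, and the cocycle identity turns this into `φ (f * g) = φ y * φ g`, from which
`R` is invertible, and into `φ x <• y = φ y * φ g * (φ y)⁻¹`. Both sides of the braid relation
preserve the product of a triple `(f, g, h)`. Their last components agree because `ψ` is an action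
of `G` on itself, and their middle ones because, by the conjugation formula, `φ` maps the product of
the last two components on either side to `φ (ψ(f, g * h)) * φ (ψ(g, h))`.
-/

open scoped RightActions

section

variable {G K : Type*} [Group G] [Group K] [MulDistribMulAction Gᵐᵒᵖ K]

def IsRightCocycle (φ : G → K) : Prop :=
  ∀ f g : G, φ (f * g) = φ f <• g * φ g

def transferAct (e : G ≃ K) (f g : G) : G :=
  e.symm (e f <• g)

def cocycleSolution (e : G ≃ K) (p : G × G) : G × G :=
  (p.1 * p.2 * (transferAct e p.1 p.2)⁻¹, transferAct e p.1 p.2)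

variable {e : G ≃ K}

theorem cocycleSolution_eq_iff {f g x y : G} :
    cocycleSolution e (f, g) = (x, y) ↔ x * y = f * g ∧ e y = e f <• g := by
  rw [← e.eq_symm_apply, cocycleSolution, Prod.mk.injEq]
  unfold transferAct
  constructor
  · rintro ⟨rfl, rfl⟩
    exact ⟨inv_mul_cancel_right _ _, rfl⟩
  · rintro ⟨hxy, rfl⟩
    exact ⟨by rw [← hxy, mul_inv_cancel_right], rfl⟩

namespace IsRightCocycle

theorem apply_mul_of_cocycleSolution_eq (hφ : IsRightCocycle e) {f g x y : G}
    (h : cocycleSolution e (f, g) = (x, y)) : e (f * g) = e y * e g := by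
  rw [hφ, (cocycleSolution_eq_iff.mp h).2]

theorem cocycleSolution_injective (hφ : IsRightCocycle e) :
    Function.Injective (cocycleSolution e) := by
  rintro ⟨f, g⟩ ⟨f', g'⟩ h
  rcases hp : cocycleSolution e (f', g') with ⟨x, y⟩
  rw [hp] at h
  have hfg := (cocycleSolution_eq_iff.mp h).1.symm.trans (cocycleSolution_eq_iff.mp hp).1
  have hg : g = g' := e.injective <| mul_left_cancel <| by
    rw [← hφ.apply_mul_of_cocycleSolution_eq h, ← hφ.apply_mul_of_cocycleSolution_eq hp, hfg]
  subst hg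
  rw [mul_right_cancel hfg]

theorem cocycleSolution_surjective (hφ : IsRightCocycle e) :
    Function.Surjective (cocycleSolution e) := by
  rintro ⟨x, y⟩
  set g := e.symm ((e y)⁻¹ * e (x * y))
  refine ⟨(x * y * g⁻¹, g), cocycleSolution_eq_iff.mpr ⟨(inv_mul_cancel_right _ _).symm, ?_⟩⟩
  have h := hφ (x * y * g⁻¹) g
  rw [inv_mul_cancel_right, e.apply_symm_apply, ← mul_inv_eq_iff_eq_mul] at h
  rw [← h, mul_inv_rev, inv_inv, mul_inv_cancel_left]

theorem op_smul_apply_of_cocycleSolution_eq (hφ : IsRightCocycle e) {f g x y : G}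
    (h : cocycleSolution e (f, g) = (x, y)) : e x <• y = e y * e g * (e y)⁻¹ := by
  refine eq_mul_inv_of_mul_eq ?_
  rw [← hφ, (cocycleSolution_eq_iff.mp h).1, hφ.apply_mul_of_cocycleSolution_eq h]

theorem cocycleSolution_yangBaxter (hφ : IsRightCocycle e) :
    fstOp (cocycleSolution e) ∘ sndOp (cocycleSolution e) ∘ fstOp (cocycleSolution e) =
      sndOp (cocycleSolution e) ∘ fstOp (cocycleSolution e) ∘ sndOp (cocycleSolution e) := by
  funext ⟨f, g, h⟩
  simp only [fstOp, sndOp, Function.comp_apply]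
  -- left side: (f, g, h) ↦ (x, a, h) ↦ (x, y, b) ↦ (z, c, b);
  -- right side: (f, g, h) ↦ (f, u, p) ↦ (w, q, p) ↦ (w, v, r)
  rcases hfg : cocycleSolution e (f, g) with ⟨x, a⟩
  rcases hah : cocycleSolution e (a, h) with ⟨y, b⟩
  rcases hxy : cocycleSolution e (x, y) with ⟨z, c⟩
  rcases hgh : cocycleSolution e (g, h) with ⟨u, p⟩
  rcases hfu : cocycleSolution e (f, u) with ⟨w, q⟩
  rcases hqp : cocycleSolution e (q, p) with ⟨v, r⟩
  obtain ⟨hxa, hea⟩ := cocycleSolution_eq_iff.mp hfg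
  obtain ⟨hyb, heb⟩ := cocycleSolution_eq_iff.mp hah
  obtain ⟨hzc, hec⟩ := cocycleSolution_eq_iff.mp hxy
  obtain ⟨hup, hep⟩ := cocycleSolution_eq_iff.mp hgh
  obtain ⟨hwq, heq⟩ := cocycleSolution_eq_iff.mp hfu
  obtain ⟨hvr, her⟩ := cocycleSolution_eq_iff.mp hqp
  have hbr : b = r := e.injective <| by
    rw [heb, hea, her, heq, op_smul_op_smul, op_smul_op_smul, hup]
  have hcb : c * b = q * p := e.injective <| by
    rw [hφ, hφ, hec, op_smul_op_smul, hyb, op_smul_mul, hφ.op_smul_apply_of_cocycleSolution_eq hfg,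
      smul_mul', smul_mul', smul_inv', ← heb, ← hep, ← her, ← hbr]
    group
  refine Prod.ext ?_ (Prod.ext ?_ hbr)
  · refine mul_right_cancel (b := c * b) ?_
    calc z * (c * b) = x * y * b := by rw [← mul_assoc, hzc]
      _ = f * g * h := by rw [mul_assoc, hyb, ← mul_assoc, hxa]
      _ = f * u * p := by rw [mul_assoc, ← hup, ← mul_assoc]
      _ = w * (c * b) := by rw [← hwq, hcb, mul_assoc]
  · rw [← mul_left_inj, hvr, ← hcb, hbr]

end IsRightCocycle

end

theorem cocycle_yang_baxter (G K : Type*) [Group G] [Group K]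
    (act : K → G → K)
    (act_mul : ∀ u v : K, ∀ g : G, act (u * v) g = act u g * act v g)
    (act_comp : ∀ u : K, ∀ g h : G, act u (g * h) = act (act u g) h)
    (act_one : ∀ u : K, act u 1 = u)
    (φ : G → K) (φinv : K → G)
    (hleft : Function.LeftInverse φinv φ) (hright : Function.RightInverse φinv φ)
    (hcoc : ∀ f g : G, φ (f * g) = act (φ f) g * φ g) :
    let ψ : G → G → G := fun f g => φinv (act (φ f) g)
    let R : G × G → G × G := fun p => (p.1 * p.2 * (ψ p.1 p.2)⁻¹, ψ p.1 p.2)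
    Function.Bijective R ∧
      fstOp R ∘ sndOp R ∘ fstOp R = sndOp R ∘ fstOp R ∘ sndOp R := by
  let : MulDistribMulAction Gᵐᵒᵖ K :=
    { smul := fun g u => act u g.unop
      one_smul := act_one
      mul_smul := fun g h u => act_comp u h.unop g.unop
      smul_mul := fun g u v => act_mul u v g.unop
      smul_one := fun g => left_eq_mul.mp <|
        show act 1 g.unop = act 1 g.unop * act 1 g.unop by rw [← act_mul, one_mul] }
  let e : G ≃ K := ⟨φ, φinv, hleft, hright⟩
  have hφ : IsRightCocycle e := hcoc
  exact ⟨⟨hφ.cocycleSolution_injective, hφ.cocycleSolution_surjective⟩,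
    hφ.cocycleSolution_yangBaxter⟩
end

section
/- Let φ : G → K be a bijective 1-cocycle. If K is abelian, then the map τ on the semidirect product G ⋉ K defined by τ(z,u) = (z, φ(z)·u⁻¹) is a group homomorphism. -/
theorem tau_hom_of_abelian (G K : Type*) [Group G] [CommGroup K]
    (act : K → G → K)
    (act_mul : ∀ u v : K, ∀ g : G, act (u * v) g = act u g * act v g)
    (act_comp : ∀ u : K, ∀ g h : G, act u (g * h) = act (act u g) h)
    (act_one : ∀ u : K, act u 1 = u)
    (φ : G → K) (hbij : Function.Bijective φ)
    (hcoc : ∀ f g : G, φ (f * g) = act (φ f) g * φ g) :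
    let mulSD : G × K → G × K → G × K := fun p q => (p.1 * q.1, act p.2 q.1 * q.2)
    let τ : G × K → G × K := fun p => (p.1, φ p.1 * p.2⁻¹)
    ∀ p q : G × K, τ (mulSD p q) = mulSD (τ p) (τ q) := by
  intro mulSD τ p q
  have hone : ∀ g : G, act (1 : K) g = 1 := by
    intro g
    have h := act_mul 1 1 g
    rw [one_mul] at h
    exact left_eq_mul.mp h
  have hinv : ∀ (u : K) (g : G), act u⁻¹ g = (act u g)⁻¹ := by
    intro u g
    have h : act u g * act u⁻¹ g = 1 := by rw [← act_mul, mul_inv_cancel, hone]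
    exact eq_inv_of_mul_eq_one_left (by rw [mul_comm]; exact h)
  simp only [mulSD, τ]
  refine Prod.ext rfl ?_
  simp only [hcoc, act_mul, hinv, mul_inv_rev]
  simp [mul_comm, mul_assoc, mul_left_comm]
end

section
/- Conversely, if the map τ(z,u) = (z, φ(z)·u⁻¹) on the semidirect product G ⋉ K is a group homomorphism, where φ : G → K is a bijective 1-cocycle, then K is abelian. -/
/-! On the subgroup `{1} ⋉ K` the map `τ` is `u ↦ φ 1 * u⁻¹`. Multiplicativity there first gives
`φ 1 = φ 1 * φ 1`, so `φ 1 = 1`, and then says that inversion is a homomorphism of `K`,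
which forces `K` to be abelian. -/

theorem mul_comm_of_mul_inv {α : Type*} [Group α] (h : ∀ a b : α, (a * b)⁻¹ = a⁻¹ * b⁻¹)
    (a b : α) : a * b = b * a := by
  simpa only [mul_inv_rev, inv_inv] using h b⁻¹ a⁻¹

theorem abelian_of_tau_hom_general (G K : Type*) [Group G] [Group K]
    (act : K → G → K)
    (act_one : ∀ u : K, act u 1 = u)
    (φ : G → K)
    (hτ : ∀ p q : G × K,
      (fun p : G × K => (p.1, φ p.1 * p.2⁻¹))
          ((fun p q : G × K => (p.1 * q.1, act p.2 q.1 * q.2)) p q) =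
        (fun p q : G × K => (p.1 * q.1, act p.2 q.1 * q.2))
          ((fun p : G × K => (p.1, φ p.1 * p.2⁻¹)) p)
          ((fun p : G × K => (p.1, φ p.1 * p.2⁻¹)) q)) :
    ∀ u v : K, u * v = v * u := by
  have hτK (u v : K) : φ 1 * (u * v)⁻¹ = φ 1 * u⁻¹ * (φ 1 * v⁻¹) := by
    simpa only [mul_one, act_one] using congrArg Prod.snd (hτ (1, u) (1, v))
  have hφ_one : φ 1 = 1 := by
    simpa only [mul_one, inv_one, left_eq_mul] using hτK 1 1
  exact mul_comm_of_mul_inv fun u v => by simpa only [hφ_one, one_mul] using hτK u v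

theorem abelian_of_tau_hom (G K : Type*) [Group G] [Group K]
    (act : K → G → K)
    (act_mul : ∀ u v : K, ∀ g : G, act (u * v) g = act u g * act v g)
    (act_comp : ∀ u : K, ∀ g h : G, act u (g * h) = act (act u g) h)
    (act_one : ∀ u : K, act u 1 = u)
    (φ : G → K) (hbij : Function.Bijective φ)
    (hcoc : ∀ f g : G, φ (f * g) = act (φ f) g * φ g)
    (hτ : ∀ p q : G × K,
      (fun p : G × K => (p.1, φ p.1 * p.2⁻¹))
          ((fun p q : G × K => (p.1 * q.1, act p.2 q.1 * q.2)) p q) =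
        (fun p q : G × K => (p.1 * q.1, act p.2 q.1 * q.2))
          ((fun p : G × K => (p.1, φ p.1 * p.2⁻¹)) p)
          ((fun p : G × K => (p.1, φ p.1 * p.2⁻¹)) q)) :
    ∀ u v : K, u * v = v * u :=
  abelian_of_tau_hom_general G K act act_one φ hτ
end

section
/- Let G be a monoid such that the map G × G → G × G, (x,y) ↦ (xy, x), is bijective. Then G is a group. -/
theorem exists_mul_eq_one_of_surjective_shear {M : Type*} [Monoid M]
    (h : Function.Surjective (fun p : M × M => (p.1 * p.2, p.1))) (x : M) :
    ∃ y : M, x * y = 1 := by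
  obtain ⟨⟨a, b⟩, hab⟩ := h (1, x)
  obtain ⟨hab_one, rfl⟩ := Prod.ext_iff.mp hab
  exact ⟨b, hab_one⟩

theorem mul_eq_one_symm_of_forall_exists_mul_eq_one {M : Type*} [Monoid M]
    (h : ∀ x : M, ∃ y : M, x * y = 1) {x y : M} (hxy : x * y = 1) : y * x = 1 := by
  obtain ⟨z, hyz⟩ := h y
  rwa [left_inv_eq_right_inv hxy hyz]

theorem group_of_bijective_shear (G : Type*) [Monoid G]
    (h : Function.Bijective (fun p : G × G => (p.1 * p.2, p.1))) :
    ∀ x : G, ∃ y : G, x * y = 1 ∧ y * x = 1 := by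
  have right_inv := exists_mul_eq_one_of_surjective_shear h.surjective
  intro x
  obtain ⟨y, hxy⟩ := right_inv x
  exact ⟨y, hxy, mul_eq_one_symm_of_forall_exists_mul_eq_one right_inv hxy⟩
end

section
/- Let A ≤ Z(G) be a central subgroup of a group G, and R(x,y) = (y, y⁻¹xy). Then the induced map on (G × G)/A (quotient by the anti-diagonal action a·(x,y) = (ax, a⁻¹y)) satisfies R ∘ R = id if and only if the commutator [x,y] = xyx⁻¹y⁻¹ lies in A for all x,y ∈ G, i.e. if and only if G/A is abelian. -/
/-!
Since `R (R (x, y)) = (y⁻¹ x y, (y⁻¹ x y)⁻¹ y (y⁻¹ x y))`, the first coordinate forces the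
translating element to be `a = ⁅y⁻¹, x⁆`; when `a` commutes with `x`, that choice also matches
the second coordinate. So `R ∘ R` is the identity modulo `A` exactly when every `⁅y⁻¹, x⁆`
lies in `A`, and these are all the commutators of `G`.
-/

/-- The conjugation Yang–Baxter operator on a group: `R(x,y) = (y, y⁻¹xy)`. -/
def conjR (G : Type*) [Group G] : G × G → G × G :=
  fun p => (p.2, p.2⁻¹ * p.1 * p.2)

open scoped commutatorElement

theorem conjR_conjR_eq_iff {G : Type*} [Group G] {a x y : G} (hax : Commute a x) :
    conjR G (conjR G (x, y)) = (a * x, a⁻¹ * y) ↔ a = ⁅y⁻¹, x⁆ := by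
  have hfst : y⁻¹ * x * y = a * x ↔ a = ⁅y⁻¹, x⁆ := by
    rw [commutatorElement_def, inv_inv, eq_mul_inv_iff_mul_eq, eq_comm]
  simp only [conjR, Prod.mk.injEq, hfst, and_iff_left_iff_imp]
  intro ha
  calc (y⁻¹ * x * y)⁻¹ * y * (y⁻¹ * x * y) = (a * x)⁻¹ * y * (a * x) := by
        rw [ha, commutatorElement_def]; group
    _ = (x * a)⁻¹ * y * (a * x) := by rw [hax.eq]
    _ = a⁻¹ * y := by rw [ha, commutatorElement_def]; group

theorem central_quotient_R_involutive_iff (G : Type*) [Group G]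
    (A : Subgroup G) (hA : A ≤ Subgroup.center G) :
    (∀ x y : G, ∃ a ∈ A, conjR G (conjR G (x, y)) = (a * x, a⁻¹ * y)) ↔
      (∀ x y : G, x * y * x⁻¹ * y⁻¹ ∈ A) := by
  have hcomm (a x : G) (ha : a ∈ A) : Commute a x := (Subgroup.mem_center_iff.mp (hA ha) x).symm
  constructor
  · intro h x y
    obtain ⟨a, ha, heq⟩ := h y x⁻¹
    rw [conjR_conjR_eq_iff (hcomm a y ha), inv_inv] at heq
    rwa [heq] at ha
  · intro h x y
    exact ⟨⁅y⁻¹, x⁆, h y⁻¹ x, (conjR_conjR_eq_iff (hcomm _ x (h y⁻¹ x))).mpr rfl⟩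
end

section
/- Let G be a group, K an abelian group with a right G-action by automorphisms, and φ : G → K a bijective 1-cocycle. For any positive integer n, the operation u * v = u^{φ⁻¹(vⁿ)} · v defines a group structure on K. -/
/-!
Writing `ψ v = φ⁻¹(vⁿ)`, the cocycle identity and `(u^g · v)ⁿ = (uⁿ)^g · vⁿ` show that
`ψ (u * v) = ψ u · ψ v`. Associativity of `*` is then the action law `(u^g)^h = u^(g h)`,
and the inverse of `u` is `(u⁻¹)^(ψ u)⁻¹`, the element `v` with `ψ v = (ψ u)⁻¹`.
-/

section RightAction

variable {G K : Type*} [Group K] {act : K → G → K}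

theorem act_one_left (act_mul : ∀ u v : K, ∀ g : G, act (u * v) g = act u g * act v g)
    (g : G) : act 1 g = 1 :=
  map_one (MonoidHom.mk' (act · g) (act_mul · · g))

theorem act_pow_left (act_mul : ∀ u v : K, ∀ g : G, act (u * v) g = act u g * act v g)
    (u : K) (g : G) (k : ℕ) : act (u ^ k) g = act u g ^ k :=
  map_pow (MonoidHom.mk' (act · g) (act_mul · · g)) u k

theorem act_inv_left (act_mul : ∀ u v : K, ∀ g : G, act (u * v) g = act u g * act v g)
    (u : K) (g : G) : act u⁻¹ g = (act u g)⁻¹ :=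
  map_inv (MonoidHom.mk' (act · g) (act_mul · · g)) u

variable [Group G] {φ : G → K}

theorem cocycle_one (act_one : ∀ u : K, act u 1 = u)
    (hcoc : ∀ f g : G, φ (f * g) = act (φ f) g * φ g) : φ 1 = 1 := by
  simpa [act_one] using hcoc 1 1

theorem cocycle_inv (act_mul : ∀ u v : K, ∀ g : G, act (u * v) g = act u g * act v g)
    (act_one : ∀ u : K, act u 1 = u) (hcoc : ∀ f g : G, φ (f * g) = act (φ f) g * φ g)
    (g : G) : φ g⁻¹ = act (φ g)⁻¹ g⁻¹ := by
  have h : act (φ g) g⁻¹ * φ g⁻¹ = 1 := by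
    rw [← hcoc, mul_inv_cancel, cocycle_one act_one hcoc]
  rw [act_inv_left act_mul, eq_inv_of_mul_eq_one_right h]

end RightAction

section CocycleStar

variable {G K : Type*} [CommGroup K] (act : K → G → K) (e : G ≃ K) (n : ℕ)

def cocycleStar (u v : K) : K :=
  act u (e.symm (v ^ n)) * v

variable {act e}

theorem cocycleStar_one_left (act_mul : ∀ u v : K, ∀ g : G, act (u * v) g = act u g * act v g)
    (u : K) : cocycleStar act e n 1 u = u := by
  rw [cocycleStar, act_one_left act_mul, one_mul]

variable (act e) [Group G]

def cocycleStarInv (u : K) : K :=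
  act u⁻¹ (e.symm (u ^ n))⁻¹

variable {act e}

theorem cocycleStar_one_right (act_one : ∀ u : K, act u 1 = u)
    (hcoc : ∀ f g : G, e (f * g) = act (e f) g * e g) (u : K) :
    cocycleStar act e n u 1 = u := by
  rw [cocycleStar, one_pow, mul_one, ← cocycle_one act_one hcoc, e.symm_apply_apply, act_one]

theorem symm_pow_cocycleStar (act_mul : ∀ u v : K, ∀ g : G, act (u * v) g = act u g * act v g)
    (hcoc : ∀ f g : G, e (f * g) = act (e f) g * e g) (u v : K) :
    e.symm (cocycleStar act e n u v ^ n) = e.symm (u ^ n) * e.symm (v ^ n) := by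
  apply e.injective
  rw [hcoc, e.apply_symm_apply, e.apply_symm_apply, e.apply_symm_apply, cocycleStar, mul_pow,
    act_pow_left act_mul]

theorem cocycleStar_assoc (act_mul : ∀ u v : K, ∀ g : G, act (u * v) g = act u g * act v g)
    (act_comp : ∀ u : K, ∀ g h : G, act u (g * h) = act (act u g) h)
    (hcoc : ∀ f g : G, e (f * g) = act (e f) g * e g) (u v w : K) :
    cocycleStar act e n (cocycleStar act e n u v) w =
      cocycleStar act e n u (cocycleStar act e n v w) := by
  conv_rhs => rw [cocycleStar, symm_pow_cocycleStar n act_mul hcoc]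
  simp only [cocycleStar]
  rw [act_mul, act_comp, mul_assoc]

theorem symm_pow_cocycleStarInv (act_mul : ∀ u v : K, ∀ g : G, act (u * v) g = act u g * act v g)
    (act_one : ∀ u : K, act u 1 = u) (hcoc : ∀ f g : G, e (f * g) = act (e f) g * e g) (u : K) :
    e.symm (cocycleStarInv act e n u ^ n) = (e.symm (u ^ n))⁻¹ := by
  apply e.injective
  rw [e.apply_symm_apply, cocycle_inv act_mul act_one hcoc, e.apply_symm_apply, cocycleStarInv,
    ← act_pow_left act_mul, inv_pow]

theorem cocycleStar_inv_right (act_mul : ∀ u v : K, ∀ g : G, act (u * v) g = act u g * act v g)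
    (act_one : ∀ u : K, act u 1 = u) (hcoc : ∀ f g : G, e (f * g) = act (e f) g * e g) (u : K) :
    cocycleStar act e n u (cocycleStarInv act e n u) = 1 := by
  rw [cocycleStar, symm_pow_cocycleStarInv n act_mul act_one hcoc, cocycleStarInv, ← act_mul,
    mul_inv_cancel, act_one_left act_mul]

theorem cocycleStar_inv_left (act_comp : ∀ u : K, ∀ g h : G, act u (g * h) = act (act u g) h)
    (act_one : ∀ u : K, act u 1 = u) (u : K) :
    cocycleStar act e n (cocycleStarInv act e n u) u = 1 := by
  rw [cocycleStar, cocycleStarInv, ← act_comp, inv_mul_cancel, act_one, inv_mul_cancel]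

end CocycleStar

theorem cocycle_symmetric_power_group_structure_general (G K : Type*) [Group G] [CommGroup K]
    (act : K → G → K)
    (act_mul : ∀ u v : K, ∀ g : G, act (u * v) g = act u g * act v g)
    (act_comp : ∀ u : K, ∀ g h : G, act u (g * h) = act (act u g) h)
    (act_one : ∀ u : K, act u 1 = u)
    (φ : G → K) (φinv : K → G)
    (hleft : Function.LeftInverse φinv φ) (hright : Function.RightInverse φinv φ)
    (hcoc : ∀ f g : G, φ (f * g) = act (φ f) g * φ g)
    (n : ℕ) :
    let star : K → K → K := fun u v => act u (φinv (v ^ n)) * v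
    (∀ u v w : K, star (star u v) w = star u (star v w)) ∧
    (∀ u : K, star u 1 = u ∧ star 1 u = u) ∧
    (∀ u : K, ∃ v : K, star u v = 1 ∧ star v u = 1) :=
  let e : G ≃ K := ⟨φ, φinv, hleft, hright⟩
  ⟨cocycleStar_assoc (e := e) n act_mul act_comp hcoc,
    fun u => ⟨cocycleStar_one_right (e := e) n act_one hcoc u,
      cocycleStar_one_left (e := e) n act_mul u⟩,
    fun u => ⟨cocycleStarInv act e n u, cocycleStar_inv_right (e := e) n act_mul act_one hcoc u,
      cocycleStar_inv_left (e := e) n act_comp act_one u⟩⟩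

theorem cocycle_symmetric_power_group_structure (G K : Type*) [Group G] [CommGroup K]
    (act : K → G → K)
    (act_mul : ∀ u v : K, ∀ g : G, act (u * v) g = act u g * act v g)
    (act_comp : ∀ u : K, ∀ g h : G, act u (g * h) = act (act u g) h)
    (act_one : ∀ u : K, act u 1 = u)
    (φ : G → K) (φinv : K → G)
    (hleft : Function.LeftInverse φinv φ) (hright : Function.RightInverse φinv φ)
    (hcoc : ∀ f g : G, φ (f * g) = act (φ f) g * φ g)
    (n : ℕ) (hn : 0 < n) :
    let star : K → K → K := fun u v => act u (φinv (v ^ n)) * v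
    (∀ u v w : K, star (star u v) w = star u (star v w)) ∧
    (∀ u : K, star u 1 = u ∧ star 1 u = u) ∧
    (∀ u : K, ∃ v : K, star u v = 1 ∧ star v u = 1) :=
  cocycle_symmetric_power_group_structure_general G K act act_mul act_comp act_one φ φinv hleft
    hright hcoc n
end
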